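/- Let $V$ be a finite-dimensional vector space over $\mathbb{Q}$ and let $\Delta$ be a simplex with vertex set $S$ (a nonempty finite set), where each face $\tau$ corresponds to a nonempty subset of $S$ and $T_\tau \subseteq V$ denotes the linear span of differences of vertices of $\tau$ (under a fixed affine embedding of $\Delta$ with affinely independent vertices). Consider the cochain complex $C^\bullet$ with $C^i = \bigoplus_{|\tau| = i+1} T_\tau$ and differential given by signed inclusions $T_{\tau'} \hookrightarrow T_\tau$ for $\tau' \subset \tau$ a facet. Then $H^k(C^\bullet) = 0$ for $k \neq 1$, and $H^1(C^\bullet)$ has dimension one. -/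

import Mathlib

/-- The tangent space of a face `τ` of a simplex with vertices `v`: the span of the
differences of the vertices of `τ`. -/
def faceTangent {n : ℕ} {V : Type*} [AddCommGroup V] [Module ℚ V]
    (v : Fin n → V) (τ : Finset (Fin n)) : Submodule ℚ V :=
  Submodule.span ℚ {x | ∃ a ∈ τ, ∃ b ∈ τ, x = v a - v b}

namespace STCC


variable {n : ℕ}

/-- The simplicial sign of `j` in `σ`. -/
def eps (j : Fin n) (σ : Finset (Fin n)) : ℚ := (-1) ^ ((σ.filter (fun x => x < j)).card)

/-- The simplicial codifferential on scalar functions of finsets. -/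
def dd (g : Finset (Fin n) → ℚ) (σ : Finset (Fin n)) : ℚ :=
  ∑ j ∈ σ, eps j σ * g (σ.erase j)

/-- The cone contraction with apex `p`. -/
def hp (p : Fin n) (g : Finset (Fin n) → ℚ) (τ : Finset (Fin n)) : ℚ :=
  if p ∈ τ then 0 else eps p (insert p τ) * g (insert p τ)

lemma eps_sq (j : Fin n) (σ : Finset (Fin n)) : eps j σ * eps j σ = 1 := by
  unfold eps; rw [← pow_add]; exact Even.neg_one_pow ⟨_, rfl⟩

lemma filter_erase (σ : Finset (Fin n)) (j : Fin n) (p : Fin n → Prop) [DecidablePred p] :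
    (σ.erase j).filter p = (σ.filter p).erase j := by
  ext x; simp [Finset.mem_erase, Finset.mem_filter]; tauto

lemma eps_erase (σ : Finset (Fin n)) {j : Fin n} (hj : j ∈ σ) (i : Fin n) :
    eps i (σ.erase j) = eps i σ * (if j < i then -1 else 1) := by
  unfold eps
  rw [filter_erase]
  by_cases hji : j < i
  · have hjmem : j ∈ σ.filter (fun x => x < i) := Finset.mem_filter.mpr ⟨hj, hji⟩
    rw [Finset.card_erase_of_mem hjmem, if_pos hji]
    obtain ⟨m, hm⟩ : ∃ m, (σ.filter (fun x => x < i)).card = m + 1 :=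
      ⟨(σ.filter (fun x => x < i)).card - 1,
        (Nat.succ_pred_eq_of_pos (Finset.card_pos.mpr ⟨j, hjmem⟩)).symm⟩
    rw [hm]
    simp [pow_succ]
  · have : j ∉ σ.filter (fun x => x < i) := fun h => hji (Finset.mem_filter.mp h).2
    rw [Finset.erase_eq_of_notMem this, if_neg hji, mul_one]

lemma eps_antisym {σ : Finset (Fin n)} {i j : Fin n} (hi : i ∈ σ) (hj : j ∈ σ) (hij : i ≠ j) :
    eps j σ * eps i (σ.erase j) = -(eps i σ * eps j (σ.erase i)) := by
  rw [eps_erase σ hj i, eps_erase σ hi j]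
  rcases hij.lt_or_gt with h | h
  · rw [if_neg (asymm h), if_pos h]; ring
  · rw [if_pos h, if_neg (asymm h)]; ring

lemma erase_comm' (σ : Finset (Fin n)) (i j : Fin n) :
    (σ.erase j).erase i = (σ.erase i).erase j := by
  ext x; simp [Finset.mem_erase]; tauto

lemma dd_dd (g : Finset (Fin n) → ℚ) (σ : Finset (Fin n)) : dd (dd g) σ = 0 := by
  have hS : dd (dd g) σ = ∑ j ∈ σ, ∑ i ∈ σ,
      (if i = j then 0 else eps j σ * eps i (σ.erase j) * g ((σ.erase j).erase i)) := by
    unfold dd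
    refine Finset.sum_congr rfl fun j hj => ?_
    rw [Finset.mul_sum]
    rw [show (∑ i ∈ σ, if i = j then 0
        else eps j σ * eps i (σ.erase j) * g ((σ.erase j).erase i))
      = ∑ i ∈ σ.erase j, (if i = j then 0
        else eps j σ * eps i (σ.erase j) * g ((σ.erase j).erase i))
      from (Finset.sum_erase _ (by simp)).symm]
    refine Finset.sum_congr rfl fun i hi => ?_
    rw [if_neg (Finset.ne_of_mem_erase hi)]
    ring
  have key : ∀ j ∈ σ, ∀ i ∈ σ,
      (if i = j then (0:ℚ) else eps j σ * eps i (σ.erase j) * g ((σ.erase j).erase i))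
      = -(if j = i then (0:ℚ) else eps i σ * eps j (σ.erase i) * g ((σ.erase i).erase j)) := by
    intro j hj i hi
    by_cases hij : i = j
    · simp [hij]
    · rw [if_neg hij, if_neg (Ne.symm hij), erase_comm' σ j i,
        show eps j σ * eps i (σ.erase j) = -(eps i σ * eps j (σ.erase i)) from
          eps_antisym hi hj hij]
      ring
  have hneg : dd (dd g) σ = - dd (dd g) σ := by
    calc dd (dd g) σ
        = ∑ j ∈ σ, ∑ i ∈ σ,
            (if i = j then (0:ℚ) else eps j σ * eps i (σ.erase j) * g ((σ.erase j).erase i)) :=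
          hS
      _ = ∑ j ∈ σ, ∑ i ∈ σ,
            -(if j = i then (0:ℚ) else eps i σ * eps j (σ.erase i) * g ((σ.erase i).erase j)) :=
          Finset.sum_congr rfl fun j hj => Finset.sum_congr rfl fun i hi => key j hj i hi
      _ = -∑ j ∈ σ, ∑ i ∈ σ,
            (if j = i then (0:ℚ) else eps i σ * eps j (σ.erase i) * g ((σ.erase i).erase j)) := by
          simp [Finset.sum_neg_distrib]
      _ = -∑ i ∈ σ, ∑ j ∈ σ,
            (if j = i then (0:ℚ) else eps i σ * eps j (σ.erase i) * g ((σ.erase i).erase j)) := by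
          rw [Finset.sum_comm]
      _ = - dd (dd g) σ := by rw [← hS]
  linarith

lemma dd_hp (c : Finset (Fin n) → ℚ) (p : Fin n) (σ : Finset (Fin n)) :
    dd (hp p c) σ + hp p (dd c) σ = c σ := by
  by_cases hps : p ∈ σ
  · rw [show hp p (dd c) σ = 0 from if_pos hps, add_zero]
    unfold dd
    rw [Finset.sum_eq_single_of_mem p hps (fun j hj hjp => by
      rw [show hp p c (σ.erase j) = 0 from
        if_pos (Finset.mem_erase.mpr ⟨Ne.symm hjp, hps⟩), mul_zero])]
    rw [show hp p c (σ.erase p) = eps p (insert p (σ.erase p)) * c (insert p (σ.erase p)) from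
      if_neg (Finset.notMem_erase p σ)]
    rw [Finset.insert_erase hps, ← mul_assoc, eps_sq, one_mul]
  · have hins : ∀ j ∈ σ, insert p (σ.erase j) = (insert p σ).erase j := by
      intro j hj
      have hjp : j ≠ p := fun h => hps (h ▸ hj)
      ext x
      simp [Finset.mem_insert, Finset.mem_erase]
      constructor
      · rintro (rfl | ⟨hxj, hxσ⟩)
        · exact ⟨Ne.symm hjp, Or.inl rfl⟩
        · exact ⟨hxj, Or.inr hxσ⟩
      · rintro ⟨hxj, rfl | hxσ⟩
        · exact Or.inl rfl
        · exact Or.inr ⟨hxj, hxσ⟩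
    rw [show hp p (dd c) σ = eps p (insert p σ) * dd c (insert p σ) from if_neg hps]
    unfold dd
    rw [Finset.sum_insert hps, Finset.erase_insert hps]
    have hmain : ∑ j ∈ σ, eps j σ * hp p c (σ.erase j)
        = ∑ j ∈ σ, -(eps p (insert p σ) * (eps j (insert p σ) * c ((insert p σ).erase j))) := by
      refine Finset.sum_congr rfl fun j hj => ?_
      have hpe : p ∉ σ.erase j := fun h => hps (Finset.mem_of_mem_erase h)
      rw [show hp p c (σ.erase j) = eps p (insert p (σ.erase j)) * c (insert p (σ.erase j)) from
        if_neg hpe, hins j hj]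
      have h1 : eps p ((insert p σ).erase j)
          = eps p (insert p σ) * (if j < p then -1 else 1) :=
        eps_erase _ (Finset.mem_insert_of_mem hj) p
      have h2 : eps j σ = eps j (insert p σ) * (if p < j then -1 else 1) := by
        conv_lhs => rw [← Finset.erase_insert hps]
        exact eps_erase _ (Finset.mem_insert_self p σ) j
      rw [h1, h2]
      have hjp : j ≠ p := fun h => hps (h ▸ hj)
      rcases hjp.lt_or_gt with h | h
      · rw [if_pos h, if_neg (asymm h)]; ring
      · rw [if_neg (asymm h), if_pos h]; ring
    rw [hmain, mul_add, ← mul_assoc, eps_sq, one_mul, Finset.mul_sum, Finset.sum_neg_distrib]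
    ring

lemma dd_sum {ι : Type*} (s : Finset ι) (G : ι → Finset (Fin n) → ℚ) (τ : Finset (Fin n)) :
    dd (fun ρ => ∑ a ∈ s, G a ρ) τ = ∑ a ∈ s, dd (G a) τ := by
  unfold dd
  simp only [Finset.mul_sum]
  rw [Finset.sum_comm]

lemma dd_sub (g h : Finset (Fin n) → ℚ) (τ : Finset (Fin n)) :
    dd (fun ρ => g ρ - h ρ) τ = dd g τ - dd h τ := by
  unfold dd
  simp [mul_sub, Finset.sum_sub_distrib]

lemma dd_pair (g : Finset (Fin n) → ℚ) {a b : Fin n} (h : a < b) :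
    dd g {a, b} = g {b} - g {a} := by
  have hne : a ≠ b := h.ne
  unfold dd
  rw [Finset.sum_pair hne]
  have e1 : ({a, b} : Finset (Fin n)).erase a = {b} := by
    rw [show ({a, b} : Finset (Fin n)) = insert a {b} from rfl,
      Finset.erase_insert (by simp [hne])]
  have e2 : ({a, b} : Finset (Fin n)).erase b = {a} := by
    rw [Finset.pair_comm, show ({b, a} : Finset (Fin n)) = insert b {a} from rfl,
      Finset.erase_insert (by simp [Ne.symm hne])]
  have s1 : eps a ({a, b} : Finset (Fin n)) = 1 := by
    unfold eps
    have : ({a, b} : Finset (Fin n)).filter (fun x => x < a) = ∅ := by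
      ext x
      simp only [Finset.mem_filter, Finset.mem_insert, Finset.mem_singleton,
        Finset.notMem_empty, iff_false, not_and]
      rintro (rfl | rfl)
      · exact lt_irrefl _
      · exact fun hlt => absurd hlt (asymm h)
    rw [this]; simp
  have s2 : eps b ({a, b} : Finset (Fin n)) = -1 := by
    unfold eps
    have : ({a, b} : Finset (Fin n)).filter (fun x => x < b) = {a} := by
      ext x
      simp only [Finset.mem_filter, Finset.mem_insert, Finset.mem_singleton]
      constructor
      · rintro ⟨rfl | rfl, hlt⟩
        · rfl
        · exact absurd hlt (lt_irrefl _)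
      · rintro rfl
        exact ⟨Or.inl rfl, h⟩
    rw [this]; simp
  rw [e1, e2, s1, s2]; ring

section Coords

variable {V : Type*} [AddCommGroup V] [Module ℚ V]

/-- The linear combination map. -/
def phi (v : Fin n → V) : (Fin n → ℚ) →ₗ[ℚ] V where
  toFun c := ∑ a, c a • v a
  map_add' c₁ c₂ := by simp [add_smul, Finset.sum_add_distrib]
  map_smul' q c := by simp [Finset.smul_sum, mul_smul]

lemma phi_apply (v : Fin n → V) (c : Fin n → ℚ) : phi v c = ∑ a, c a • v a := rfl

lemma phi_mem (v : Fin n → V) (τ : Finset (Fin n)) (c : Fin n → ℚ)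
    (hsupp : ∀ a, a ∉ τ → c a = 0) (hsum : ∑ a, c a = 0) :
    phi v c ∈ Submodule.span ℚ {x | ∃ a ∈ τ, ∃ b ∈ τ, x = v a - v b} := by
  rcases τ.eq_empty_or_nonempty with rfl | ⟨b, hb⟩
  · have hc : c = 0 := funext fun a => hsupp a (by simp)
    rw [hc, map_zero]
    exact zero_mem _
  · have hphi : phi v c = ∑ a, c a • (v a - v b) := by
      rw [phi_apply]
      simp only [smul_sub, Finset.sum_sub_distrib, ← Finset.sum_smul, hsum, zero_smul, sub_zero]
    rw [hphi]
    refine Submodule.sum_mem _ fun a _ => ?_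
    by_cases ha : a ∈ τ
    · exact Submodule.smul_mem _ _ (Submodule.subset_span ⟨a, ha, b, hb, rfl⟩)
    · rw [hsupp a ha, zero_smul]
      exact zero_mem _

lemma exists_coords (v : Fin n → V) (τ : Finset (Fin n)) {x : V}
    (hx : x ∈ Submodule.span ℚ {x | ∃ a ∈ τ, ∃ b ∈ τ, x = v a - v b}) :
    ∃ c : Fin n → ℚ, (∀ a, a ∉ τ → c a = 0) ∧ (∑ a, c a = 0) ∧ phi v c = x := by
  let K : Submodule ℚ (Fin n → ℚ) :=
    { carrier := {c | (∀ a, a ∉ τ → c a = 0) ∧ ∑ a, c a = 0}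
      add_mem' := by
        rintro p q ⟨hp1, hp2⟩ ⟨hq1, hq2⟩
        exact ⟨fun a ha => by simp [Pi.add_apply, hp1 a ha, hq1 a ha],
          by simp [Finset.sum_add_distrib, hp2, hq2]⟩
      zero_mem' := ⟨fun a _ => rfl, by simp⟩
      smul_mem' := by
        rintro q c ⟨hc1, hc2⟩
        refine ⟨fun a ha => by simp [hc1 a ha], ?_⟩
        simp only [Pi.smul_apply, smul_eq_mul, ← Finset.mul_sum, hc2, mul_zero] }
  have hle : Submodule.span ℚ {x | ∃ a ∈ τ, ∃ b ∈ τ, x = v a - v b} ≤ K.map (phi v) := by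
    rw [Submodule.span_le]
    rintro x ⟨a, ha, b, hb, rfl⟩
    refine ⟨fun y => (if y = a then 1 else 0) - (if y = b then 1 else 0), ⟨?_, ?_⟩, ?_⟩
    · intro y hy
      have h1 : y ≠ a := fun h => hy (h ▸ ha)
      have h2 : y ≠ b := fun h => hy (h ▸ hb)
      simp [h1, h2]
    · simp [Finset.sum_sub_distrib, Finset.sum_ite_eq']
    · rw [phi_apply]
      simp [sub_smul, ite_smul, Finset.sum_sub_distrib, Finset.sum_ite_eq']
  obtain ⟨c, hc, hphi⟩ := hle hx
  exact ⟨c, hc.1, hc.2, hphi⟩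

lemma coords_zero {v : Fin n → V} (hv : AffineIndependent ℚ v) (c : Fin n → ℚ)
    (hsum : ∑ a, c a = 0) (hphi : phi v c = 0) : c = 0 := by
  funext a
  exact affineIndependent_iff.mp hv Finset.univ c hsum hphi a (Finset.mem_univ a)

end Coords


end STCC

open STCC

/-- For a simplex `Δ` of dimension `r + 1 ≥ 1` with affinely independent vertices
`v : Fin (r+2) → V` in a `ℚ`-vector space, the cochain complex
`Cⁱ = ⊕_{|τ| = i+1} T_τ` (with `T_τ` the tangent space of the face `τ` and differential
the signed inclusions) has `Hᵏ = 0` for `k ≠ 1`, and `H¹` is one-dimensional. -/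
theorem simplex_tangent_complex_cohomology
    (r : ℕ) (V : Type*) [AddCommGroup V] [Module ℚ V]
    (v : Fin (r + 2) → V) (hv : AffineIndependent ℚ v)
    (d : ∀ i : ℕ,
      ((τ : {τ : Finset (Fin (r + 2)) // τ.card = i + 1}) → faceTangent v τ.1) →ₗ[ℚ]
        ((σ : {σ : Finset (Fin (r + 2)) // σ.card = i + 2}) → faceTangent v σ.1))
    (hd : ∀ (i : ℕ) (f : (τ : {τ : Finset (Fin (r + 2)) // τ.card = i + 1}) →
        faceTangent v τ.1)
        (σ : {σ : Finset (Fin (r + 2)) // σ.card = i + 2}),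
      (d i f σ : V) = ∑ j ∈ (σ : Finset (Fin (r + 2))).attach,
        (-1 : ℚ) ^ (((σ : Finset (Fin (r + 2))).filter (fun x => x < j.1)).card) •
          ((f ⟨(σ : Finset (Fin (r + 2))).erase j.1, by
            simp [Finset.card_erase_of_mem j.2, σ.2]⟩ : V))) :
    LinearMap.ker (d 0) = ⊥ ∧
      (∀ k : ℕ, 1 ≤ k → LinearMap.ker (d (k + 1)) ≤ LinearMap.range (d k)) ∧
      Module.finrank ℚ
        (↥(LinearMap.ker (d 1)) ⧸
          (LinearMap.range (d 0)).comap (LinearMap.ker (d 1)).subtype) = 1 := by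
  -- C⁰ is trivial
  have hbot1 : ∀ τ : {τ : Finset (Fin (r + 2)) // τ.card = 0 + 1},
      faceTangent v τ.1 = ⊥ := by
    rintro ⟨τ, hτ⟩
    obtain ⟨a, rfl⟩ := Finset.card_eq_one.mp hτ
    rw [eq_bot_iff, faceTangent, Submodule.span_le]
    rintro x ⟨c, hc, b, hb, rfl⟩
    simp only [Finset.mem_singleton] at hc hb
    simp [hc, hb]
  have hC0 : ∀ x : ((τ : {τ : Finset (Fin (r + 2)) // τ.card = 0 + 1}) → faceTangent v τ.1),
      x = 0 := by
    intro x
    funext τ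
    apply Subtype.ext
    have hmem : ((x τ : V)) ∈ (⊥ : Submodule ℚ V) := by
      rw [← hbot1 τ]
      exact (x τ).2
    simpa using hmem
  -- pushing `phi` through the differential
  have dphi : ∀ (i : ℕ) (g : (τ : {τ : Finset (Fin (r + 2)) // τ.card = i + 1}) →
        faceTangent v τ.1) (W : Finset (Fin (r + 2)) → Fin (r + 2) → ℚ),
      (∀ τ : {τ : Finset (Fin (r + 2)) // τ.card = i + 1}, (g τ : V) = phi v (W τ.1)) →
      ∀ σ : {σ : Finset (Fin (r + 2)) // σ.card = i + 2},
        (d i g σ : V) = phi v (fun a => dd (fun ρ => W ρ a) σ.1) := by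
    intro i g W hgW σ
    rw [hd i g σ]
    simp only [hgW]
    simp only [← map_smul]
    rw [← map_sum]
    congr 1
    funext a
    rw [Finset.sum_apply]
    simp only [Pi.smul_apply, smul_eq_mul]
    exact Finset.sum_attach σ.1 (fun j => eps j σ.1 * W (σ.1.erase j) a)
  -- the coordinate package for a cocycle
  have main : ∀ (i : ℕ) (f : (τ : {τ : Finset (Fin (r + 2)) // τ.card = i + 2}) →
        faceTangent v τ.1), d (i + 1) f = 0 →
      ∃ (cc : Finset (Fin (r + 2)) → Fin (r + 2) → ℚ)
        (g' : Fin (r + 2) → Finset (Fin (r + 2)) → ℚ),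
        (∀ ρ a, a ∉ ρ → cc ρ a = 0) ∧
        (∀ ρ, ∑ a, cc ρ a = 0) ∧
        (∀ σ : {σ : Finset (Fin (r + 2)) // σ.card = i + 2}, phi v (cc σ.1) = (f σ : V)) ∧
        (∀ a τ, dd (g' a) τ = cc τ a) ∧
        (∀ a τ, a ∉ τ → g' a τ = 0) ∧
        (∀ τ, dd (fun ρ => ∑ a, g' a ρ) τ = 0) := by
    intro i f hf
    have hex : ∀ σ : {σ : Finset (Fin (r + 2)) // σ.card = i + 2},
        ∃ c : Fin (r + 2) → ℚ, (∀ a, a ∉ σ.1 → c a = 0) ∧ (∑ a, c a = 0) ∧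
          phi v c = (f σ : V) :=
      fun σ => exists_coords v σ.1 (f σ).2
    choose co hco1 hco2 hco3 using hex
    set cc : Finset (Fin (r + 2)) → Fin (r + 2) → ℚ :=
      fun ρ => if h : ρ.card = i + 2 then co ⟨ρ, h⟩ else 0 with hccdef
    have hcc1 : ∀ ρ a, a ∉ ρ → cc ρ a = 0 := by
      intro ρ a ha
      rw [hccdef]
      by_cases h : ρ.card = i + 2
      · simp only [dif_pos h]
        exact hco1 ⟨ρ, h⟩ a ha
      · simp [dif_neg h]
    have hcc2 : ∀ ρ, ∑ a, cc ρ a = 0 := by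
      intro ρ
      rw [hccdef]
      by_cases h : ρ.card = i + 2
      · simp only [dif_pos h]
        exact hco2 ⟨ρ, h⟩
      · simp [dif_neg h]
    have hcc3 : ∀ σ : {σ : Finset (Fin (r + 2)) // σ.card = i + 2},
        phi v (cc σ.1) = (f σ : V) := by
      intro σ
      rw [hccdef]
      simp only [dif_pos σ.2]
      rw [show (⟨σ.1, σ.2⟩ : {σ : Finset (Fin (r + 2)) // σ.card = i + 2}) = σ from rfl]
      exact hco3 σ
    have hdd0 : ∀ a τ, dd (fun ρ => cc ρ a) τ = 0 := by
      intro a τ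
      by_cases hτ : τ.card = i + 3
      · suffices h : (fun a => dd (fun ρ => cc ρ a) τ) = 0 from congrFun h a
        apply coords_zero hv
        · rw [show (∑ a, dd (fun ρ => cc ρ a) τ)
              = dd (fun ρ => ∑ a, cc ρ a) τ from (dd_sum Finset.univ _ τ).symm]
          rw [show (fun ρ => ∑ a, cc ρ a) = fun _ => (0:ℚ) from funext hcc2]
          simp [dd]
        · have hσ : τ.card = (i + 1) + 2 := hτ
          have := dphi (i + 1) f cc (fun σ => (hcc3 σ).symm) ⟨τ, hσ⟩
          rw [← this, hf]
          simp
      · refine Finset.sum_eq_zero fun j hj => ?_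
        have hpos : 0 < τ.card := Finset.card_pos.mpr ⟨j, hj⟩
        have hne : (τ.erase j).card ≠ i + 2 := by
          rw [Finset.card_erase_of_mem hj]
          omega
        rw [hccdef]
        simp [dif_neg hne]
    refine ⟨cc, fun a => hp (if a = 0 then 1 else 0) (fun ρ => cc ρ a),
      hcc1, hcc2, hcc3, ?_, ?_, ?_⟩
    · intro a τ
      have hh := dd_hp (fun ρ => cc ρ a) (if a = 0 then 1 else 0) τ
      have h0 : hp (if a = 0 then 1 else 0) (dd (fun ρ => cc ρ a)) τ = 0 := by
        simp [hp, hdd0]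
      rw [h0, add_zero] at hh
      exact hh
    · intro a τ ha
      have hne : a ∉ insert (if a = 0 then 1 else 0) τ := by
        intro hmem
        rcases Finset.mem_insert.mp hmem with h1 | h2
        · by_cases ha0 : a = 0
          · subst ha0
            rw [if_pos rfl] at h1
            exact absurd h1 (by simp [Fin.ext_iff])
          · rw [if_neg ha0] at h1
            exact ha0 h1
        · exact ha h2
      show hp (if a = 0 then 1 else 0) (fun ρ => cc ρ a) τ = 0
      unfold hp
      by_cases hm : (if a = 0 then 1 else 0 : Fin (r + 2)) ∈ τ
      · rw [if_pos hm]
      · rw [if_neg hm]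
        exact mul_eq_zero_of_right _ (hcc1 _ a hne)
    · intro τ
      rw [dd_sum Finset.univ _ τ]
      have : ∀ a, dd (hp (if a = 0 then 1 else 0) (fun ρ => cc ρ a)) τ = cc τ a := by
        intro a
        have hh := dd_hp (fun ρ => cc ρ a) (if a = 0 then 1 else 0) τ
        have h0 : hp (if a = 0 then 1 else 0) (dd (fun ρ => cc ρ a)) τ = 0 := by
          simp [hp, hdd0]
        rw [h0, add_zero] at hh
        exact hh
      simp only [this]
      exact hcc2 τ
  refine ⟨(Submodule.eq_bot_iff _).mpr fun x _ => hC0 x, ?_, ?_⟩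
  · -- exactness in degrees ≥ 2
    intro k hk f hfker
    obtain ⟨cc, g', hcc1, hcc2, hcc3, hg'dd, hg'supp, hs0⟩ :=
      main k f (LinearMap.mem_ker.mp hfker)
    set s : Finset (Fin (r + 2)) → ℚ := fun ρ => ∑ a, g' a ρ with hsdef
    set t : Finset (Fin (r + 2)) → ℚ := hp 0 s with htdef
    have ht : ∀ τ, dd t τ = s τ := by
      intro τ
      have hh := dd_hp s 0 τ
      have h0 : hp 0 (dd s) τ = 0 := by
        simp [hp, hs0]
      rw [h0, add_zero] at hh
      exact hh
    set u : Fin (r + 2) → Finset (Fin (r + 2)) → ℚ :=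
      fun a ρ => if ρ.min = (a : WithTop (Fin (r + 2))) then t ρ else 0 with hudef
    have hu_supp : ∀ a ρ, a ∉ ρ → u a ρ = 0 := by
      intro a ρ ha
      show (if ρ.min = (a : WithTop (Fin (r + 2))) then t ρ else 0) = 0
      split_ifs with h
      · exact absurd (Finset.mem_of_min h) ha
      · rfl
    have hu_sum : ∀ ρ : Finset (Fin (r + 2)), ρ.Nonempty → ∑ a, u a ρ = t ρ := by
      intro ρ hρ
      show (∑ a : Fin (r + 2), if ρ.min = ((a : Fin (r + 2)) : WithTop (Fin (r + 2))) then t ρ else 0) = t ρ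
      have hiff : ∀ a : Fin (r + 2), (ρ.min = (a : WithTop (Fin (r + 2)))) ↔ (a = ρ.min' hρ) := by
        intro a
        rw [← Finset.coe_min' hρ]
        constructor
        · intro h
          exact (WithTop.coe_inj.mp h).symm
        · intro h
          rw [h]
      simp only [hiff]
      simp [Finset.sum_ite_eq' Finset.univ (ρ.min' hρ) (fun _ => t ρ)]
    set gc : Fin (r + 2) → Finset (Fin (r + 2)) → ℚ :=
      fun a τ => g' a τ - dd (u a) τ with hgcdef
    have hgc_dd : ∀ a τ, dd (gc a) τ = cc τ a := by
      intro a τ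
      have : dd (fun ρ => g' a ρ - dd (u a) ρ) τ = dd (g' a) τ - dd (dd (u a)) τ :=
        dd_sub _ _ τ
      rw [show gc a = fun ρ => g' a ρ - dd (u a) ρ from rfl, this, dd_dd, sub_zero, hg'dd]
    have hgc_supp : ∀ a τ, a ∉ τ → gc a τ = 0 := by
      intro a τ ha
      have h1 : dd (u a) τ = 0 :=
        Finset.sum_eq_zero fun j hj => mul_eq_zero_of_right _
          (hu_supp a _ (fun hmem => ha (Finset.mem_of_mem_erase hmem)))
      show g' a τ - dd (u a) τ = 0
      rw [h1, sub_zero, hg'supp a τ ha]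
    have hgc_sum : ∀ τ : Finset (Fin (r + 2)), τ.card = k + 1 → ∑ a, gc a τ = 0 := by
      intro τ hτ
      have h1 : ∑ a, dd (u a) τ = dd t τ := by
        rw [← dd_sum Finset.univ u τ]
        refine Finset.sum_congr rfl fun j hj => ?_
        show eps j τ * (∑ a, u a (τ.erase j)) = eps j τ * t (τ.erase j)
        rw [hu_sum (τ.erase j) ?_]
        rw [← Finset.card_pos, Finset.card_erase_of_mem hj, hτ]
        omega
      have h2 : ∑ a, gc a τ = (∑ a, g' a τ) - ∑ a, dd (u a) τ := by
        show (∑ a, (g' a τ - dd (u a) τ)) = _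
        rw [Finset.sum_sub_distrib]
      rw [h2, h1, ht τ]
      have : (∑ a, g' a τ) = s τ := rfl
      rw [this, sub_self]
    refine LinearMap.mem_range.mpr ⟨fun τ => ⟨phi v (fun a => gc a τ.1),
      phi_mem v τ.1 _ (fun a ha => hgc_supp a τ.1 ha) (hgc_sum τ.1 τ.2)⟩, ?_⟩
    funext σ
    apply Subtype.ext
    rw [dphi k _ (fun ρ a => gc a ρ) (fun τ => rfl) σ]
    have : (fun a => dd (fun ρ => gc a ρ) σ.1) = cc σ.1 := by
      funext a
      exact hgc_dd a σ.1
    rw [this]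
    exact hcc3 σ
  · -- H¹ is one-dimensional
    have h01 : (0 : Fin (r + 2)) ≠ 1 := by simp [Fin.ext_iff]
    have hlt01 : (0 : Fin (r + 2)) < 1 := lt_of_le_of_ne (Fin.zero_le _) h01
    -- the basic cocycle w
    set δd : Fin (r + 2) → Finset (Fin (r + 2)) → ℚ :=
      fun a ρ => if ρ = {a} then 1 else 0 with hδdef
    have hw_supp : ∀ (σ : Finset (Fin (r + 2))) (a : Fin (r + 2)), a ∉ σ →
        dd (δd a) σ = 0 := by
      intro σ a ha
      refine Finset.sum_eq_zero fun j hj => ?_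
      refine mul_eq_zero_of_right _ ?_
      show (if σ.erase j = {a} then (1:ℚ) else 0) = 0
      rw [if_neg]
      intro h
      exact ha (Finset.mem_of_mem_erase (h ▸ Finset.mem_singleton_self a))
    have indicator : ∀ ρ : Finset (Fin (r + 2)), ρ.card = 1 → ∑ a, δd a ρ = 1 := by
      intro ρ h
      obtain ⟨x, rfl⟩ := Finset.card_eq_one.mp h
      show (∑ a : Fin (r + 2), if ({x} : Finset (Fin (r + 2))) = {a} then (1:ℚ) else 0) = 1
      simp [Finset.singleton_inj]
    have hw_sum : ∀ σ : Finset (Fin (r + 2)), σ.card = 1 + 1 → ∑ a, dd (δd a) σ = 0 := by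
      intro σ h
      rw [← dd_sum Finset.univ δd σ]
      obtain ⟨x, y, hxy, rfl⟩ := Finset.card_eq_two.mp h
      rcases hxy.lt_or_gt with hlt | hlt
      · rw [dd_pair _ hlt, indicator _ (Finset.card_singleton _),
          indicator _ (Finset.card_singleton _), sub_self]
      · rw [Finset.pair_comm, dd_pair _ hlt, indicator _ (Finset.card_singleton _),
          indicator _ (Finset.card_singleton _), sub_self]
    set w : (τ : {τ : Finset (Fin (r + 2)) // τ.card = 1 + 1}) → faceTangent v τ.1 :=
      fun σ => ⟨phi v (fun a => dd (δd a) σ.1),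
        phi_mem v σ.1 _ (fun a ha => hw_supp σ.1 a ha) (hw_sum σ.1 σ.2)⟩ with hwdef
    have hwker : w ∈ LinearMap.ker (d 1) := by
      rw [LinearMap.mem_ker]
      funext σ
      apply Subtype.ext
      rw [dphi 1 w (fun ρ a => dd (δd a) ρ) (fun τ => rfl) σ]
      have hzero : (fun a => dd (fun ρ => dd (δd a) ρ) σ.1) = (0 : Fin (r + 2) → ℚ) :=
        funext fun a => dd_dd (δd a) σ.1
      rw [hzero, map_zero]
      simp
    have hwval : (w ⟨({0, 1} : Finset (Fin (r + 2))), Finset.card_pair h01⟩ : V)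
        = v 1 - v 0 := by
      show phi v (fun a => dd (δd a) ({0, 1} : Finset (Fin (r + 2)))) = v 1 - v 0
      have hfun : (fun a => dd (δd a) ({0, 1} : Finset (Fin (r + 2))))
          = fun a => (if a = 1 then (1:ℚ) else 0) - (if a = 0 then 1 else 0) := by
        funext a
        rw [dd_pair (δd a) hlt01]
        show (if ({1} : Finset (Fin (r + 2))) = {a} then (1:ℚ) else 0)
          - (if ({0} : Finset (Fin (r + 2))) = {a} then (1:ℚ) else 0) = _
        simp [Finset.singleton_inj, eq_comm]
      rw [hfun, phi_apply]
      simp [sub_smul, ite_smul, Finset.sum_sub_distrib, Finset.sum_ite_eq']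
    have hw0 : w ≠ 0 := by
      intro h0
      have hval0 : (w ⟨({0, 1} : Finset (Fin (r + 2))), Finset.card_pair h01⟩ : V) = 0 := by
        rw [h0]
        simp
      have heq : v 1 = v 0 := by rwa [hwval, sub_eq_zero] at hval0
      exact h01 (hv.injective heq).symm
    -- every cocycle is a multiple of w
    have hker_le : LinearMap.ker (d 1) ≤ Submodule.span ℚ {w} := by
      intro f hf
      obtain ⟨cc, g', hcc1, hcc2, hcc3, hg'dd, hg'supp, hs0⟩ :=
        main 0 f (LinearMap.mem_ker.mp hf)
      set s : Finset (Fin (r + 2)) → ℚ := fun ρ => ∑ a, g' a ρ with hsdef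
      set μ : ℚ := s {0} with hμdef
      have hs_const : ∀ x : Fin (r + 2), s {x} = μ := by
        intro x
        by_cases hx : x = 0
        · rw [hx]
        · have h := hs0 ({0, x} : Finset (Fin (r + 2)))
          rw [show dd (fun ρ => ∑ a, g' a ρ) ({0, x} : Finset (Fin (r + 2)))
              = s {x} - s {0} from dd_pair s (Fin.pos_of_ne_zero hx)] at h
          rw [← hμdef] at h
          linarith
      have hg's : ∀ a x : Fin (r + 2), g' a {x} = μ * (if x = a then 1 else 0) := by
        intro a x
        have hsum : ∑ b, (g' b {x} - μ * (if x = b then 1 else 0)) = 0 := by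
          rw [Finset.sum_sub_distrib]
          have h2 : ∑ b, μ * (if x = b then (1:ℚ) else 0) = μ := by
            rw [← Finset.mul_sum]
            simp [Finset.sum_ite_eq]
          rw [h2, show (∑ b, g' b {x}) = s {x} from rfl, hs_const x, sub_self]
        have hvanish : ∀ b, b ≠ x → g' b {x} - μ * (if x = b then 1 else 0) = 0 := by
          intro b hb
          rw [hg'supp b {x} (by simp [hb]), if_neg (Ne.symm hb)]
          ring
        have hsingle := Finset.sum_eq_single_of_mem x (Finset.mem_univ x)
          (fun b _ hbx => hvanish b hbx)
        have hx0 : g' x {x} - μ * (if x = x then 1 else 0) = 0 :=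
          hsingle ▸ hsum
        by_cases hax : a = x
        · subst hax
          rw [if_pos rfl] at hx0 ⊢
          linarith
        · have hv2 := hvanish a hax
          rw [if_neg (fun h => hax h.symm)] at hv2 ⊢
          linarith
      have hcc_eq : ∀ τ : Finset (Fin (r + 2)), τ.card = 1 + 1 → ∀ a,
          cc τ a = μ * dd (δd a) τ := by
        intro τ hτ2 a
        rw [← hg'dd a τ]
        unfold dd
        rw [Finset.mul_sum]
        refine Finset.sum_congr rfl fun j hj => ?_
        have hcard : (τ.erase j).card = 1 := by
          rw [Finset.card_erase_of_mem hj, hτ2]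
        obtain ⟨x, hx⟩ := Finset.card_eq_one.mp hcard
        rw [hx, hg's a x]
        rw [show δd a {x} = (if x = a then (1:ℚ) else 0) from by
          show (if ({x} : Finset (Fin (r + 2))) = {a} then (1:ℚ) else 0) = _
          simp [Finset.singleton_inj]]
        ring
      have hfeq : f = μ • w := by
        funext σ
        apply Subtype.ext
        show (f σ : V) = ((μ • w) σ : V)
        rw [← hcc3 σ]
        have h1 : cc σ.1 = fun a => μ * dd (δd a) σ.1 :=
          funext fun a => hcc_eq σ.1 σ.2 a
        rw [h1]
        have h2 : (fun a => μ * dd (δd a) σ.1) = μ • (fun a => dd (δd a) σ.1) := rfl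
        rw [h2, map_smul]
        rfl
      rw [hfeq]
      exact Submodule.smul_mem _ μ (Submodule.mem_span_singleton_self w)
    have hker : LinearMap.ker (d 1) = Submodule.span ℚ {w} :=
      le_antisymm hker_le ((Submodule.span_singleton_le_iff_mem w _).mpr hwker)
    have hrange0 : LinearMap.range (d 0) = ⊥ :=
      LinearMap.range_eq_bot.mpr (LinearMap.ext fun x => by
        rw [hC0 x, map_zero]
        rfl)
    rw [hrange0, Submodule.comap_bot, Submodule.ker_subtype]
    rw [(Submodule.quotEquivOfEqBot (⊥ : Submodule ℚ (LinearMap.ker (d 1))) rfl).finrank_eq]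
    rw [hker]
    exact finrank_span_singleton hw0
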